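/- The antipode s of the n-rank Taft algebra 𝒜̄_q(n) has order 2ℓ as an algebra anti-automorphism when ℓ > 1; in particular s² has order ℓ. -/

import Mathlib

open scoped TensorProduct

def starForm {n : ℕ} (α β : Fin n → ℤ) : ℤ :=
  ∑ j : Fin n, ∑ i : Fin n, if (j : ℕ) < (i : ℕ) then α i * β j else 0

noncomputable def theta {k : Type*} [Field k] (q : k) {n : ℕ} (α β : Fin n → ℤ) : k :=
  q ^ (starForm α β - starForm β α)

def epsZ {n : ℕ} (i : Fin n) : Fin n → ℤ := fun j => if j = i then 1 else 0

/-- The ordered monomial `x^γ = x_1^{γ_1} ⋯ x_n^{γ_n}` built from a family `x`. -/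
def xpow {A : Type*} [Ring A] {n : ℕ} (x : Fin n → A) (γ : Fin n → ℕ) : A :=
  ((List.finRange n).map (fun i => x i ^ γ i)).prod

/-- A presentation of the `n`-rank Taft algebra inside a Hopf algebra `A`
(generators `K(α)`, `x_i` and the defining relations, together with the values of
the comultiplication, counit and antipode on the generators).  The scalar `t`
is the parameter used in the skew bicharacter `θ`: for the `n`-rank Taft algebra
`𝒜̄_q(n)` one takes `t = q`, while `t = 1` gives the presentation of the `n`-fold
tensor power of the Taft algebra (the rank-`n` Taft algebra `𝒜̄_q(1)^{⊗n}`). -/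
structure TaftPresentation (k : Type*) [Field k] (A : Type*) [Ring A]
    [HopfAlgebra k A] (n ℓ : ℕ) (q t : k) where
  K : (Fin n → ℤ) → A
  x : Fin n → A
  K_zero : K 0 = 1
  K_add : ∀ α β, K α * K β = K (α + β)
  K_ell : ∀ i, K (epsZ i) ^ ℓ = 1
  K_x : ∀ i j, K (epsZ i) * x j
      = (theta t (epsZ i) (epsZ j) * if i = j then q else 1) • (x j * K (epsZ i))
  x_x : ∀ i j, x i * x j = theta t (epsZ i) (epsZ j) • (x j * x i)
  x_ell : ∀ i, x i ^ ℓ = 0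
  comul_K : ∀ α, Coalgebra.comul (R := k) (K α) = K α ⊗ₜ[k] K α
  comul_x : ∀ i, Coalgebra.comul (R := k) (x i) = x i ⊗ₜ[k] 1 + K (epsZ i) ⊗ₜ[k] x i
  counit_K : ∀ α, Coalgebra.counit (R := k) (K α) = 1
  counit_x : ∀ i, Coalgebra.counit (R := k) (x i) = 0
  antipode_K : ∀ α, HopfAlgebra.antipode (R := k) (K α) = K (-α)
  antipode_x : ∀ i, HopfAlgebra.antipode (R := k) (x i) = -(K (-epsZ i) * x i)

namespace TaftPresentation

variable {k : Type*} [Field k] {A : Type*} [Ring A] [HopfAlgebra k A]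
  {n ℓ : ℕ} {q t : k}

/-- The basis monomial `x^γ K(α)`. -/
def mono (T : TaftPresentation k A n ℓ q t) (γ α : Fin n → Fin ℓ) : A :=
  xpow T.x (fun i => (γ i : ℕ)) * T.K (fun i => (α i : ℤ))

end TaftPresentation

/-! The square `s²` of the antipode is an algebra automorphism fixing every `K(α)` and scaling
each `x_i` by `q⁻¹`, so it acts diagonally on the basis `x^γ K(α)` with eigenvalue `q^{-|γ|}`.
Since `q⁻¹` itself occurs (on `x_i`) and is a primitive `ℓ`-th root of unity, `s²` has order `ℓ`.
Then `s` has order `2ℓ` unless it is a power of `s²`, which it is not: `s(x_i) = -K(-ε_i) x_i`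
is not a multiple of `x_i`. -/

theorem orderOf_eq_two_mul_orderOf_sq {G : Type*} [Monoid G] {g : G}
    (h : ∀ m : ℕ, (g ^ 2) ^ m ≠ g) : orderOf g = 2 * orderOf (g ^ 2) := by
  rcases Nat.even_or_odd' (orderOf g) with ⟨j, hj | hj⟩
  · rw [orderOf_pow_of_dvd two_ne_zero ⟨j, hj⟩, hj, Nat.mul_div_cancel_left j two_pos]
  · refine absurd ?_ (h (j + 1))
    rw [← pow_mul, show 2 * (j + 1) = orderOf g + 1 by omega, pow_succ, pow_orderOf_eq_one,
      one_mul]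

theorem Module.End.pow_apply_of_apply_eq_smul {R M : Type*} [CommSemiring R] [AddCommMonoid M]
    [Module R M] {f : Module.End R M} {c : R} {v : M} (h : f v = c • v) (m : ℕ) :
    (f ^ m) v = c ^ m • v := by
  induction m with
  | zero => simp
  | succ m ih => rw [pow_succ', Module.End.mul_apply, ih, map_smul, h, smul_smul, pow_succ]

theorem map_xpow {F A B : Type*} [Ring A] [Ring B] [FunLike F A B] [RingHomClass F A B]
    (f : F) {n : ℕ} (x : Fin n → A) (γ : Fin n → ℕ) : f (xpow x γ) = xpow (fun i => f (x i)) γ := by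
  simp [xpow, map_list_prod, Function.comp_def]

theorem xpow_pi_single {A : Type*} [Ring A] {n : ℕ} (x : Fin n → A) (i : Fin n) (m : ℕ) :
    xpow x (Pi.single i m) = x i ^ m := by
  rw [xpow, List.prod_map_eq_pow_single i _ (fun j hj _ => by simp [hj]),
    List.count_eq_one_of_mem (List.nodup_finRange n) (List.mem_finRange i)]
  simp

theorem xpow_smul {k A : Type*} [CommRing k] [Ring A] [Algebra k A] (c : k) {n : ℕ}
    (x : Fin n → A) (γ : Fin n → ℕ) : xpow (fun i => c • x i) γ = c ^ (∑ i, γ i) • xpow x γ := by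
  have key : ∀ l : List (Fin n), (l.map fun i => (c • x i) ^ γ i).prod =
      c ^ (l.map γ).sum • (l.map fun i => x i ^ γ i).prod := by
    intro l
    induction l with
    | nil => simp
    | cons a l ih =>
      simp only [List.map_cons, List.prod_cons, List.sum_cons]
      rw [ih, smul_pow, smul_mul_smul_comm, pow_add]
  rw [xpow, key, Fin.sum_univ_def, xpow]

namespace HopfAlgebra

variable (R : Type*) {A : Type*} [CommSemiring R] [Semiring A] [HopfAlgebra R A]

def antipodeSq : A →ₐ[R] A :=
  .ofLinearMap (antipode R ∘ₗ antipode R) (by simp [antipode_one])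
    (fun a b => by simp [antipode_mul_antidistrib])

theorem antipodeSq_apply (a : A) : antipodeSq R a = antipode R (antipode R a) := rfl

end HopfAlgebra

namespace TaftPresentation

open HopfAlgebra

variable {k : Type*} [Field k] {A : Type*} [Ring A] [HopfAlgebra k A] {n ℓ : ℕ} {q t : k}
  (T : TaftPresentation k A n ℓ q t)

theorem K_neg_mul_K (α : Fin n → ℤ) : T.K (-α) * T.K α = 1 := by
  rw [T.K_add, neg_add_cancel, T.K_zero]

theorem K_eps_mul_x_self (i : Fin n) : T.K (epsZ i) * T.x i = q • (T.x i * T.K (epsZ i)) := by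
  simpa [theta] using T.K_x i i

theorem K_neg_eps_mul_x_mul_K_eps (hq : q ≠ 0) (i : Fin n) :
    T.K (-epsZ i) * T.x i * T.K (epsZ i) = q⁻¹ • T.x i := by
  rw [eq_inv_smul_iff₀ hq, mul_assoc, ← mul_smul_comm, ← K_eps_mul_x_self, ← mul_assoc,
    K_neg_mul_K, one_mul]

theorem antipodeSq_K (α : Fin n → ℤ) : antipodeSq k (T.K α) = T.K α := by
  simp [antipodeSq_apply, T.antipode_K]

theorem antipodeSq_x (hq : q ≠ 0) (i : Fin n) : antipodeSq k (T.x i) = q⁻¹ • T.x i := by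
  rw [antipodeSq_apply, T.antipode_x, map_neg, antipode_mul_antidistrib, T.antipode_x,
    T.antipode_K, neg_neg, neg_mul, neg_neg, K_neg_eps_mul_x_mul_K_eps T hq]

theorem antipodeSq_mono (hq : q ≠ 0) (γ α : Fin n → Fin ℓ) :
    antipodeSq k (T.mono γ α) = q⁻¹ ^ (∑ i, (γ i : ℕ)) • T.mono γ α := by
  rw [mono, map_mul, map_xpow, antipodeSq_K]
  simp only [antipodeSq_x T hq, xpow_smul, smul_mul_assoc]

theorem val_pi_single_one [NeZero ℓ] (hℓ : 1 < ℓ) (i : Fin n) :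
    (fun j => ((Pi.single i (1 : Fin ℓ) : Fin n → Fin ℓ) j : ℕ)) =
      (Pi.single i 1 : Fin n → ℕ) := by
  funext j
  rcases eq_or_ne j i with rfl | h
  · simp [Nat.mod_eq_of_lt hℓ]
  · simp [h]

theorem mono_single_zero [NeZero ℓ] (hℓ : 1 < ℓ) (i : Fin n) :
    T.mono (Pi.single i 1) 0 = T.x i := by
  simp [mono, val_pi_single_one hℓ, xpow_pi_single, ← Pi.zero_def, T.K_zero]

theorem mono_single_single [NeZero ℓ] (hℓ : 1 < ℓ) (i : Fin n) :
    T.mono (Pi.single i 1) (Pi.single i 1) = T.x i * T.K (epsZ i) := by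
  have : (fun j => ((Pi.single i (1 : Fin ℓ) : Fin n → Fin ℓ) j : ℤ)) = epsZ i := by
    funext j
    rcases eq_or_ne j i with rfl | h
    · simp [epsZ, Nat.mod_eq_of_lt hℓ]
    · simp [epsZ, h]
  simp [mono, val_pi_single_one hℓ, xpow_pi_single, this]

theorem antipode_x_ne_smul [NeZero ℓ] (hℓ : 1 < ℓ)
    (b : Module.Basis ((Fin n → Fin ℓ) × (Fin n → Fin ℓ)) k A)
    (hb : ∀ p, b p = T.mono p.1 p.2) (i : Fin n) (c : k) :
    antipode k (T.x i) ≠ c • T.x i := by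
  intro h
  -- left multiplication by `K(ε_i)` turns `s(x_i) = c x_i` into a relation between basis vectors
  have key : (c * q) • b (Pi.single i 1, Pi.single i 1) = -b (Pi.single i 1, 0) := calc
    _ = c • (T.K (epsZ i) * T.x i) := by
      rw [hb, mono_single_single T hℓ, K_eps_mul_x_self, smul_smul]
    _ = T.K (epsZ i) * antipode k (T.x i) := by rw [h, mul_smul_comm]
    _ = -b (Pi.single i 1, 0) := by
      rw [T.antipode_x, mul_neg, ← mul_assoc, T.K_add, add_neg_cancel, T.K_zero, one_mul, hb,
        mono_single_zero T hℓ]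
  have hne : (Pi.single i 1 : Fin n → Fin ℓ) ≠ 0 := by
    rw [Ne, Pi.single_eq_zero_iff]
    exact fun h1 => by simpa [Nat.mod_eq_of_lt hℓ] using congrArg Fin.val h1
  simpa [Finsupp.single_apply, hne] using congrArg (fun v => b.repr v (Pi.single i 1, 0)) key

theorem antipode_sq_pow_eq_one_iff [NeZero ℓ] (hℓ : 1 < ℓ) (hq : q ≠ 0)
    (b : Module.Basis ((Fin n → Fin ℓ) × (Fin n → Fin ℓ)) k A)
    (hb : ∀ p, b p = T.mono p.1 p.2) (i : Fin n) (m : ℕ) :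
    ((antipode k : Module.End k A) ^ 2) ^ m = 1 ↔ q⁻¹ ^ m = 1 := by
  have hdiag (p) : ((antipode k : Module.End k A) ^ 2) (b p) = q⁻¹ ^ (∑ j, (p.1 j : ℕ)) • b p := by
    rw [hb]
    exact T.antipodeSq_mono hq _ _
  constructor
  · intro h
    have hx : T.x i ≠ 0 := by simpa [hb, mono_single_zero T hℓ] using b.ne_zero (Pi.single i 1, 0)
    have := Module.End.pow_apply_of_apply_eq_smul (hdiag (Pi.single i 1, 0)) m
    simp only [h, Module.End.one_apply, hb, mono_single_zero T hℓ, val_pi_single_one hℓ,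
      Finset.sum_pi_single', Finset.mem_univ, if_true, pow_one] at this
    exact smul_left_injective k hx (by simpa using this.symm)
  · intro h
    refine b.ext fun p => ?_
    rw [Module.End.pow_apply_of_apply_eq_smul (hdiag p), ← pow_mul, mul_comm, pow_mul, h, one_pow,
      one_smul, Module.End.one_apply]

end TaftPresentation

theorem stmt5_general {k : Type*} [Field k]
    {A : Type*} [Ring A] [HopfAlgebra k A] {n ℓ : ℕ} {q : k}
    (hq : IsPrimitiveRoot q ℓ) (hℓ : 1 < ℓ) (hn : 0 < n)
    (T : TaftPresentation k A n ℓ q q)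
    (b : Module.Basis ((Fin n → Fin ℓ) × (Fin n → Fin ℓ)) k A)
    (hb : ∀ p, b p = T.mono p.1 p.2) :
    orderOf (HopfAlgebra.antipode (R := k) : Module.End k A) = 2 * ℓ ∧
    orderOf ((HopfAlgebra.antipode (R := k) : Module.End k A) ^ 2) = ℓ := by
  have : NeZero ℓ := ⟨by omega⟩
  have hq0 : q ≠ 0 := hq.ne_zero (by omega)
  let i : Fin n := ⟨0, hn⟩
  have hsq : orderOf ((HopfAlgebra.antipode k : Module.End k A) ^ 2) = ℓ := by
    rw [hq.inv.eq_orderOf, orderOf_eq_orderOf_iff]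
    exact T.antipode_sq_pow_eq_one_iff hℓ hq0 b hb i
  refine ⟨?_, hsq⟩
  rw [orderOf_eq_two_mul_orderOf_sq, hsq]
  intro m h
  have hpow := Module.End.pow_apply_of_apply_eq_smul
    (f := (HopfAlgebra.antipode k : Module.End k A) ^ 2) (T.antipodeSq_x hq0 i) m
  exact T.antipode_x_ne_smul hℓ b hb i _ (h ▸ hpow)

/-- when `ℓ > 1` (and `n ≥ 1`), the antipode of the `n`-rank Taft
algebra has order `2ℓ` as a linear endomorphism, and `s²` has order `ℓ`. -/
theorem stmt5 {k : Type*} [Field k] [CharZero k] [IsAlgClosed k]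
    {A : Type*} [Ring A] [HopfAlgebra k A] {n ℓ : ℕ} {q : k}
    (hq : IsPrimitiveRoot q ℓ) (hℓ : 1 < ℓ) (hn : 0 < n)
    (T : TaftPresentation k A n ℓ q q)
    (b : Module.Basis ((Fin n → Fin ℓ) × (Fin n → Fin ℓ)) k A)
    (hb : ∀ p, b p = T.mono p.1 p.2) :
    orderOf (HopfAlgebra.antipode (R := k) : Module.End k A) = 2 * ℓ ∧
    orderOf ((HopfAlgebra.antipode (R := k) : Module.End k A) ^ 2) = ℓ :=
  stmt5_general hq hℓ hn T b hb
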